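/- arXiv:2509.08127 — 3 statements merged into one kernel-verified Lean document; each statement's English description precedes it below -/
import Mathlib

section
/- With A = [[−1, 1],[0, −1]], B = [[2n+1, n],[2, 1]], m₁ = Aⁿ⁺¹BAB and m₂ = Aⁿ⁺¹BA as above, let P₁ = [[1, 0],[2, 1]] and P₂ = [[1, −1],[1, 0]]. Then P₁·m₁·P₁⁻¹ = (−1)ⁿ·[[−1, −n],[0, −1]] and P₂·m₂·P₂⁻¹ = (−1)ⁿ·[[−1, −2],[0, −1]]. Consequently, for n ≥ 1, m₁ and m₂ are conjugate in SL(2,ℝ). -/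
/-!
P₁ and P₂ have determinant one, so m₁ and m₂ are SL(2,ℝ)-conjugate to ±[[-1, -n], [0, -1]] and
±[[-1, -2], [0, -1]] (the same sign (-1)ⁿ). Conjugating an upper triangular matrix by
diag(t, t⁻¹) multiplies its corner entry by t², and for n ≥ 1 the ratio 2/n is a positive real
square, which links the two parabolic forms.
-/

namespace Matrix

variable {ι R : Type*} [Fintype ι] [DecidableEq ι] [CommRing R]

def IsSLConj (M N : Matrix ι ι R) : Prop :=
  ∃ G : Matrix ι ι R, G.det = 1 ∧ G * M * G⁻¹ = N

namespace IsSLConj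

variable {M N K : Matrix ι ι R}

theorem symm (h : IsSLConj M N) : IsSLConj N M := by
  obtain ⟨G, hG, rfl⟩ := h
  have hu : IsUnit G.det := hG ▸ isUnit_one
  refine ⟨G⁻¹, by rw [det_nonsing_inv, hG, Ring.inverse_one], ?_⟩
  rw [nonsing_inv_nonsing_inv G hu]
  simp only [mul_assoc, nonsing_inv_mul_cancel_left _ _ hu, nonsing_inv_mul _ hu, mul_one]

theorem trans (h₁ : IsSLConj M N) (h₂ : IsSLConj N K) : IsSLConj M K := by
  obtain ⟨G, hG, rfl⟩ := h₁
  obtain ⟨H, hH, rfl⟩ := h₂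
  refine ⟨H * G, by rw [det_mul, hG, hH, one_mul], ?_⟩
  rw [mul_inv_rev]
  simp only [mul_assoc]

theorem smul (h : IsSLConj M N) (s : R) : IsSLConj (s • M) (s • N) := by
  obtain ⟨G, hG, rfl⟩ := h
  exact ⟨G, hG, by rw [Matrix.mul_smul, Matrix.smul_mul]⟩

end IsSLConj

theorem inv_fin_two_of_det_eq_one {a b c d : R} (h : a * d - b * c = 1) :
    !![a, b; c, d]⁻¹ = !![d, -b; -c, a] := by
  rw [inv_def, det_fin_two_of, h, Ring.inverse_one, one_smul, adjugate_fin_two_of]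

theorem upperUnitriangular_fin_two_pow (b : R) (k : ℕ) :
    !![1, b; 0, 1] ^ k = !![1, k * b; 0, 1] := by
  induction k with
  | zero => simp [one_fin_two]
  | succ k ih => simp [pow_succ, ih, add_one_mul, add_comm]

theorem isSLConj_upperTriangular_fin_two_sq_mul {K : Type*} [Field K] (a b d : K) {t : K} (ht : t ≠ 0) :
    IsSLConj !![a, b; 0, d] !![a, t ^ 2 * b; 0, d] := by
  refine ⟨!![t, 0; 0, t⁻¹], by simp [det_fin_two_of, ht], ?_⟩
  rw [inv_fin_two_of_det_eq_one (by simp [ht])]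
  simp [field]

theorem isSLConj_upperTriangular_fin_two {a b c d : ℝ} (hbc : 0 < b * c) :
    IsSLConj !![a, b; 0, d] !![a, c; 0, d] := by
  have hb : b ≠ 0 := left_ne_zero_of_mul hbc.ne'
  have hcb : 0 < c / b := div_pos_iff.mpr (mul_pos_iff.mp (mul_comm b c ▸ hbc))
  have := isSLConj_upperTriangular_fin_two_sq_mul a b d (Real.sqrt_pos.mpr hcb).ne'
  rwa [Real.sq_sqrt hcb.le, div_mul_cancel₀ _ hb] at this

end Matrix

open Matrix

section Pretzel

variable {R : Type*} [CommRing R] (n : ℕ)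

theorem pretzelA_pow (k : ℕ) : (!![-1, 1; 0, -1] : Matrix (Fin 2) (Fin 2) R) ^ k
    = (-1 : R) ^ k • !![1, -(k : R); 0, 1] := by
  rw [show (!![-1, 1; 0, -1] : Matrix (Fin 2) (Fin 2) R) = (-1 : R) • !![1, -1; 0, 1] by simp,
    smul_pow, upperUnitriangular_fin_two_pow, mul_neg_one]

theorem conj_pretzel_m₁ :
    !![1, 0; 2, 1] * ((!![-1, 1; 0, -1] : Matrix (Fin 2) (Fin 2) R) ^ (n + 1) *
      !![2 * (n : R) + 1, (n : R); 2, 1] * !![-1, 1; 0, -1] * !![2 * (n : R) + 1, (n : R); 2, 1]) *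
      !![1, 0; 2, 1]⁻¹ = (-1 : R) ^ n • !![-1, -(n : R); 0, -1] := by
  rw [pretzelA_pow, inv_fin_two_of_det_eq_one (by ring)]
  simp [pow_succ]
  and_intros <;> ring

theorem conj_pretzel_m₂ :
    !![1, -1; 1, 0] * ((!![-1, 1; 0, -1] : Matrix (Fin 2) (Fin 2) R) ^ (n + 1) *
      !![2 * (n : R) + 1, (n : R); 2, 1] * !![-1, 1; 0, -1]) *
      !![1, -1; 1, 0]⁻¹ = (-1 : R) ^ n • !![-1, -2; 0, -1] := by
  rw [pretzelA_pow, inv_fin_two_of_det_eq_one (by ring)]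
  simp [pow_succ]
  and_intros <;> ring

end Pretzel

/-- Conjugating m₁ and m₂ by P₁ = [[1,0],[2,1]] and P₂ = [[1,−1],[1,0]] puts them in
upper-triangular parabolic form, and consequently m₁ and m₂ are SL(2,ℝ)-conjugate. -/
theorem pretzel_m1_m2_conjugate (n : ℕ) (hn : 1 ≤ n) :
    let A : Matrix (Fin 2) (Fin 2) ℝ := !![-1, 1; 0, -1]
    let B : Matrix (Fin 2) (Fin 2) ℝ := !![2 * (n : ℝ) + 1, (n : ℝ); 2, 1]
    let m₁ : Matrix (Fin 2) (Fin 2) ℝ := A ^ (n + 1) * B * A * B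
    let m₂ : Matrix (Fin 2) (Fin 2) ℝ := A ^ (n + 1) * B * A
    let P₁ : Matrix (Fin 2) (Fin 2) ℝ := !![1, 0; 2, 1]
    let P₂ : Matrix (Fin 2) (Fin 2) ℝ := !![1, -1; 1, 0]
    P₁ * m₁ * P₁⁻¹ = ((-1 : ℝ) ^ n) • !![-1, -(n : ℝ); 0, -1] ∧
    P₂ * m₂ * P₂⁻¹ = ((-1 : ℝ) ^ n) • !![-1, -2; 0, -1] ∧
    ∃ G : Matrix (Fin 2) (Fin 2) ℝ, G.det = 1 ∧ G * m₁ * G⁻¹ = m₂ := by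
  intro A B m₁ m₂ P₁ P₂
  have h₁ : P₁ * m₁ * P₁⁻¹ = (-1 : ℝ) ^ n • !![-1, -(n : ℝ); 0, -1] := conj_pretzel_m₁ n
  have h₂ : P₂ * m₂ * P₂⁻¹ = (-1 : ℝ) ^ n • !![-1, -2; 0, -1] := conj_pretzel_m₂ n
  have hn₀ : (0 : ℝ) < n := by exact_mod_cast hn
  have hT : IsSLConj !![-1, -(n : ℝ); 0, -1] !![-1, -2; 0, -1] :=
    isSLConj_upperTriangular_fin_two (by linarith)
  have hm₁ : IsSLConj m₁ _ := ⟨P₁, by simp [P₁, det_fin_two_of], h₁⟩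
  have hm₂ : IsSLConj m₂ _ := ⟨P₂, by simp [P₂, det_fin_two_of], h₂⟩
  exact ⟨h₁, h₂, (hm₁.trans (hT.smul _)).trans hm₂.symm⟩
end

section
/- If G ∈ GL(2,ℝ) has det G = −1 and M ∈ SL(2,ℝ) is elliptic, then Δ(G·M·G⁻¹) and Δ(M) have opposite signs, where Δ(N) = N₁₂ − N₂₁. -/
/-!
Let `ω v w = v₀ w₁ - v₁ w₀` be the area form on `ℝ²`. For elliptic `M` the quadratic form
`v ↦ ω v (M v)` is definite, of sign opposite to that of `Δ M`. Since `ω (G v) (G w) = det G * ω v w`,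
the form of `G M G⁻¹` evaluated at `G v` is `det G = -1` times the form of `M` at `v`,
so the sign of `Δ` flips.
-/

namespace Matrix

variable {R : Type*}

def delta [Sub R] (N : Matrix (Fin 2) (Fin 2) R) : R := N 0 1 - N 1 0

section CommRing

variable [CommRing R]

def areaForm (v w : Fin 2 → R) : R := v 0 * w 1 - v 1 * w 0

theorem areaForm_mulVec_mulVec (G : Matrix (Fin 2) (Fin 2) R) (v w : Fin 2 → R) :
    areaForm (G *ᵥ v) (G *ᵥ w) = G.det * areaForm v w := by
  simp only [areaForm, mulVec, dotProduct, Fin.sum_univ_two, det_fin_two]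
  ring

theorem areaForm_mulVec_conj {G : Matrix (Fin 2) (Fin 2) R} (hG : IsUnit G.det)
    (M : Matrix (Fin 2) (Fin 2) R) (v : Fin 2 → R) :
    areaForm (G *ᵥ v) ((G * M * G⁻¹) *ᵥ (G *ᵥ v)) = G.det * areaForm v (M *ᵥ v) := by
  rw [mulVec_mulVec, Matrix.mul_assoc, nonsing_inv_mul G hG, Matrix.mul_one, ← mulVec_mulVec,
    areaForm_mulVec_mulVec]

theorem delta_mul_areaForm_mulVec_neg [LinearOrder R] [IsStrictOrderedRing R]
    {M : Matrix (Fin 2) (Fin 2) R} (hM : M.trace ^ 2 < 4 * M.det) {v : Fin 2 → R} (hv : v ≠ 0) :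
    M.delta * areaForm v (M *ᵥ v) < 0 := by
  have hv_sq : 0 < v 0 ^ 2 + v 1 ^ 2 := by
    have hv' : v 0 ≠ 0 ∨ v 1 ≠ 0 := by
      by_contra! h
      exact hv (funext (Fin.forall_fin_two.mpr h))
    rcases hv' with h | h <;> positivity
  rw [trace_fin_two, det_fin_two] at hM
  -- With `Q = a x² + b x y + c y²`, `a = M₁₀`, `c = -M₀₁`: add `4 a Q = (2 a x + b y)² + (4 a c - b²) y²`
  -- to its mirror image `4 c Q = (2 c y + b x)² + (4 a c - b²) x²`.
  have key : 4 * (M.delta * areaForm v (M *ᵥ v)) =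
      -((2 * M 1 0 * v 0 + (M 1 1 - M 0 0) * v 1) ^ 2
        + (2 * M 0 1 * v 1 + (M 0 0 - M 1 1) * v 0) ^ 2
        + (4 * (M 0 0 * M 1 1 - M 0 1 * M 1 0) - (M 0 0 + M 1 1) ^ 2) * (v 0 ^ 2 + v 1 ^ 2)) := by
    simp only [delta, areaForm, mulVec, dotProduct, Fin.sum_univ_two]
    ring
  nlinarith [mul_pos (sub_pos.mpr hM) hv_sq]

end CommRing

end Matrix

theorem Real.sign_eq_neg_sign_of_mul_neg {x y : ℝ} (h : x * y < 0) :
    Real.sign x = -Real.sign y := by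
  rcases mul_neg_iff.mp h with ⟨hx, hy⟩ | ⟨hx, hy⟩
  · rw [Real.sign_of_pos hx, Real.sign_of_neg hy, neg_neg]
  · rw [Real.sign_of_neg hx, Real.sign_of_pos hy]

open Matrix

/-- Conjugation by a determinant −1 matrix flips the sign of Δ on elliptic matrices. -/
theorem det_neg_one_conj_flips_delta_sign
    (G M : Matrix (Fin 2) (Fin 2) ℝ)
    (hG : G.det = -1) (hM : M.det = 1) (hell : |Matrix.trace M| < 2) :
    Real.sign ((G * M * G⁻¹) 0 1 - (G * M * G⁻¹) 1 0) =
      -Real.sign (M 0 1 - M 1 0) := by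
  have hGdet : IsUnit G.det := by simp [hG]
  have hGu : IsUnit G := (isUnit_iff_isUnit_det G).mpr hGdet
  have hM_ell : M.trace ^ 2 < 4 * M.det := by
    rw [hM]
    nlinarith [sq_lt_sq' (abs_lt.mp hell).1 (abs_lt.mp hell).2]
  have hN_ell : (G * M * G⁻¹).trace ^ 2 < 4 * (G * M * G⁻¹).det := by
    rwa [trace_conj hGu, det_conj hGu]
  have hGv : G *ᵥ 1 ≠ 0 := fun h =>
    one_ne_zero (mulVec_injective_of_det_ne_zero hGdet.ne_zero (h.trans (mulVec_zero G).symm))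
  have hN := delta_mul_areaForm_mulVec_neg hN_ell hGv
  have hM' := delta_mul_areaForm_mulVec_neg hM_ell (one_ne_zero : (1 : Fin 2 → ℝ) ≠ 0)
  rw [areaForm_mulVec_conj hGdet, hG, neg_one_mul] at hN
  have hΔ : (G * M * G⁻¹).delta * M.delta < 0 := by
    nlinarith [mul_pos_of_neg_of_neg hN hM', sq_nonneg (areaForm 1 (M *ᵥ 1))]
  exact Real.sign_eq_neg_sign_of_mul_neg hΔ
end

section
/- Two irreducible representations ρ₁, ρ₂ : G → SL(2,ℝ) of a group G with equal character (tr ρ₁(g) = tr ρ₂(g) for all g ∈ G) are conjugate by a matrix in GL(2,ℝ), whose determinant may be taken to be either +1 or −1 (after scaling). -/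
/-!
Extend `ρᵢ` to algebra maps `Lᵢ : K[G] → M₂(K)`. For irreducible `ρ` the trace form is
nondegenerate on the image of `L`: an `x` in its radical has `tr x = tr x² = 0`, hence `det x = 0`,
so `x M x = tr(x M) x = 0` for `M` in the image, and `x` kills the orbit `L(K[G]) (x u)`, which is
all of `K²` unless `x u = 0`. As `tr ∘ L₁ = tr ∘ L₂`, this gives `ker L₁ = ker L₂`.
An intertwiner is then `P (L₁ x v) = L₂ x w`, well defined as soon as `Ann v ⊆ Ann w`: if the image
of `L₁` contains a nonzero singular `a = L₁ x₀`, take `v` in the range of `a` and `w` in that of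
`L₂ x₀`; otherwise that image is a division algebra and any `v, w ≠ 0` will do. By Schur `P` is
invertible, and it is finally rescaled to determinant `±1`.
-/

open Matrix

namespace Matrix

variable {K : Type*} [CommRing K]

theorem trace_mul_self_fin_two (a : Matrix (Fin 2) (Fin 2) K) :
    trace (a * a) = trace a ^ 2 - 2 * a.det := by
  simp only [trace_fin_two, det_fin_two, mul_apply, Fin.sum_univ_two]
  ring

/-- Polarized Cayley–Hamilton identity. -/
theorem mul_mul_fin_two (a M : Matrix (Fin 2) (Fin 2) K) :
    a * M * a = trace (a * M) • a - a.det • M.adjugate := by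
  ext i j
  fin_cases i <;> fin_cases j <;>
    simp [trace_fin_two, det_fin_two, adjugate_fin_two, mul_apply, Fin.sum_univ_two] <;> ring

theorem exists_mulVec_ne_zero {m n : Type*} [Fintype n] {M : Matrix m n K} (hM : M ≠ 0) :
    ∃ u, M *ᵥ u ≠ 0 := by
  by_contra! h
  exact hM (ext_iff_mulVec.2 fun u => by simp [h u])

/-- The range of a singular `a` is the line through `a *ᵥ y`. -/
theorem mul_eq_zero_of_mulVec_mulVec_eq_zero [IsDomain K] {a b : Matrix (Fin 2) (Fin 2) K}
    {y : Fin 2 → K} (ha : a.det = 0) (hay : a *ᵥ y ≠ 0) (hb : b *ᵥ (a *ᵥ y) = 0) :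
    b * a = 0 := by
  obtain ⟨k, hk⟩ := Function.ne_iff.1 hay
  ext i j
  have hbi := congrFun hb i
  rw [det_fin_two] at ha
  simp only [mulVec, dotProduct, Fin.sum_univ_two, Pi.zero_apply] at hbi hk
  have key : (a k 0 * y 0 + a k 1 * y 1) * (b * a) i j = 0 := by
    rw [mul_apply, Fin.sum_univ_two]
    fin_cases k <;> fin_cases j <;> simp only [Fin.zero_eta, Fin.mk_one, Fin.isValue]
    · linear_combination a 0 0 * hbi - y 1 * b i 1 * ha
    · linear_combination a 0 1 * hbi + y 0 * b i 1 * ha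
    · linear_combination a 1 0 * hbi + y 1 * b i 0 * ha
    · linear_combination a 1 1 * hbi - y 0 * b i 0 * ha
  exact (mul_eq_zero.1 key).resolve_left hk

end Matrix

namespace MonoidHom

variable {K G : Type*} [Field K] [Monoid G] {n : Type*} [Fintype n] [DecidableEq n]

def HasCommonEigenvector (ρ : G →* Matrix n n K) : Prop :=
  ∃ v : n → K, v ≠ 0 ∧ ∀ g, ∃ c : K, ρ g *ᵥ v = c • v

noncomputable def orbitMap (ρ : G →* Matrix n n K) (v : n → K) :
    MonoidAlgebra K G →ₗ[K] n → K where
  toFun x := MonoidAlgebra.lift K _ G ρ x *ᵥ v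
  map_add' x y := by simp [add_mulVec]
  map_smul' c x := by simp [smul_mulVec]

@[simp]
theorem orbitMap_apply (ρ : G →* Matrix n n K) (v : n → K) (x : MonoidAlgebra K G) :
    ρ.orbitMap v x = MonoidAlgebra.lift K _ G ρ x *ᵥ v := rfl

@[simp]
theorem orbitMap_of_mul (ρ : G →* Matrix n n K) (v : n → K) (g : G) (x : MonoidAlgebra K G) :
    ρ.orbitMap v (MonoidAlgebra.of K G g * x) = ρ g *ᵥ ρ.orbitMap v x := by
  simp only [orbitMap_apply, map_mul, MonoidAlgebra.lift_of, mulVec_mulVec]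

theorem trace_lift_eq_of_trace_eq {ρ₁ ρ₂ : G →* Matrix n n K}
    (hchar : ∀ g, trace (ρ₁ g) = trace (ρ₂ g)) (x : MonoidAlgebra K G) :
    trace (MonoidAlgebra.lift K _ G ρ₁ x) = trace (MonoidAlgebra.lift K _ G ρ₂ x) := by
  induction x using MonoidAlgebra.induction_on with
  | of g => simpa using hchar g
  | add x y hx hy => simp [hx, hy]
  | smul c x hx => simp [hx]

variable {ρ ρ₁ ρ₂ : G →* Matrix (Fin 2) (Fin 2) K}

theorem hasCommonEigenvector_of_invariant (W : Submodule K (Fin 2 → K))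
    (hW : ∀ g, ∀ u ∈ W, ρ g *ᵥ u ∈ W) (hbot : W ≠ ⊥) (htop : W ≠ ⊤) :
    ρ.HasCommonEigenvector := by
  have hrank : Module.finrank K W = 1 := by
    have := Submodule.finrank_lt htop
    have := Submodule.one_le_finrank_iff.2 hbot
    simp only [Module.finrank_fin_fun] at *
    omega
  obtain ⟨v, hv, hspan⟩ := finrank_eq_one_iff'.1 hrank
  refine ⟨v, by simpa using hv, fun g => ?_⟩
  obtain ⟨c, hc⟩ := hspan ⟨ρ g *ᵥ v, hW g v v.2⟩
  exact ⟨c, by simpa using congrArg Subtype.val hc.symm⟩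

theorem orbitMap_surjective (hρ : ¬ρ.HasCommonEigenvector) {v : Fin 2 → K} (hv : v ≠ 0) :
    Function.Surjective (ρ.orbitMap v) := by
  rw [← LinearMap.range_eq_top]
  by_contra htop
  refine hρ (hasCommonEigenvector_of_invariant _ ?_ ?_ htop)
  · rintro g _ ⟨x, rfl⟩
    exact ⟨MonoidAlgebra.of K G g * x, orbitMap_of_mul ρ v g x⟩
  · exact (Submodule.ne_bot_iff _).2 ⟨v, ⟨1, by simp⟩, hv⟩

theorem lift_eq_zero_of_trace_mul_eq_zero [NeZero (2 : K)] (hρ : ¬ρ.HasCommonEigenvector)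
    {x : MonoidAlgebra K G} (hx : ∀ h, trace (MonoidAlgebra.lift K _ G ρ x * ρ h) = 0) :
    MonoidAlgebra.lift K _ G ρ x = 0 := by
  set L := MonoidAlgebra.lift K _ G ρ
  have horth : ∀ y, trace (L x * L y) = 0 := by
    intro y
    induction y using MonoidAlgebra.induction_on with
    | of h => simpa [L] using hx h
    | add y z hy hz => simp [mul_add, hy, hz]
    | smul c y hy => simp [hy]
  have hdet : (L x).det = 0 := by
    have h1 := horth 1
    have h2 := horth x
    rw [map_one, mul_one] at h1
    rw [trace_mul_self_fin_two, h1] at h2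
    exact (mul_eq_zero.1 (by linear_combination -h2)).resolve_left two_ne_zero
  have hsandwich : ∀ y, L x * L y * L x = 0 := fun y => by
    rw [mul_mul_fin_two, horth, hdet]; simp
  by_contra hne
  obtain ⟨u, hu⟩ := exists_mulVec_ne_zero hne
  refine hne (ext_iff_mulVec.2 fun w => ?_)
  obtain ⟨y, rfl⟩ := orbitMap_surjective hρ hu w
  rw [orbitMap_apply, mulVec_mulVec, mulVec_mulVec, hsandwich, zero_mulVec, zero_mulVec]

theorem lift_eq_zero_of_lift_eq_zero [NeZero (2 : K)]
    (hchar : ∀ g, trace (ρ₁ g) = trace (ρ₂ g)) (hρ₂ : ¬ρ₂.HasCommonEigenvector)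
    {x : MonoidAlgebra K G} (hx : MonoidAlgebra.lift K _ G ρ₁ x = 0) :
    MonoidAlgebra.lift K _ G ρ₂ x = 0 :=
  lift_eq_zero_of_trace_mul_eq_zero hρ₂ fun h => by
    simpa [hx] using (trace_lift_eq_of_trace_eq hchar (x * MonoidAlgebra.of K G h)).symm

theorem exists_intertwiner_of_ker_orbitMap_le (hρ₁ : ¬ρ₁.HasCommonEigenvector)
    {v w : Fin 2 → K} (hv : v ≠ 0) (hw : w ≠ 0)
    (hker : LinearMap.ker (ρ₁.orbitMap v) ≤ LinearMap.ker (ρ₂.orbitMap w)) :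
    ∃ P : Matrix (Fin 2) (Fin 2) K, P.det ≠ 0 ∧ ∀ g, P * ρ₁ g = ρ₂ g * P := by
  obtain ⟨s, hs⟩ := (ρ₁.orbitMap v).exists_rightInverse_of_surjective
    (LinearMap.range_eq_top.2 (orbitMap_surjective hρ₁ hv))
  set P := LinearMap.toMatrix' (ρ₂.orbitMap w ∘ₗ s)
  have hP : ∀ x, P *ᵥ ρ₁.orbitMap v x = ρ₂.orbitMap w x := by
    intro x
    have hsx : s (ρ₁.orbitMap v x) - x ∈ LinearMap.ker (ρ₁.orbitMap v) := by
      rw [LinearMap.mem_ker, map_sub, ← LinearMap.comp_apply, hs, LinearMap.id_apply, sub_self]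
    rw [LinearMap.toMatrix'_mulVec, LinearMap.comp_apply, ← sub_eq_zero, ← map_sub]
    exact hker hsx
  have hint : ∀ g, P * ρ₁ g = ρ₂ g * P := by
    intro g
    refine ext_iff_mulVec.2 fun u => ?_
    obtain ⟨x, rfl⟩ := orbitMap_surjective hρ₁ hv u
    rw [← mulVec_mulVec, ← mulVec_mulVec, ← orbitMap_of_mul, hP, hP, orbitMap_of_mul]
  refine ⟨P, fun hdet => ?_, hint⟩
  obtain ⟨u, hu, hPu⟩ := exists_mulVec_eq_zero_iff.2 hdet
  refine hρ₁ (hasCommonEigenvector_of_invariant (LinearMap.ker P.mulVecLin) ?_ ?_ ?_)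
  · intro g u hu
    rw [LinearMap.mem_ker, mulVecLin_apply] at hu ⊢
    rw [mulVec_mulVec, hint, ← mulVec_mulVec, hu, mulVec_zero]
  · exact (Submodule.ne_bot_iff _).2 ⟨u, hPu, hu⟩
  · intro htop
    have hPv : P *ᵥ v = w := by simpa using hP 1
    exact hw (hPv ▸ (LinearMap.mem_ker.1 (htop ▸ Submodule.mem_top : v ∈ _)))

theorem exists_ker_orbitMap_le [NeZero (2 : K)] (hchar : ∀ g, trace (ρ₁ g) = trace (ρ₂ g))
    (hρ₁ : ¬ρ₁.HasCommonEigenvector) (hρ₂ : ¬ρ₂.HasCommonEigenvector) :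
    ∃ v w : Fin 2 → K, v ≠ 0 ∧ w ≠ 0 ∧
      LinearMap.ker (ρ₁.orbitMap v) ≤ LinearMap.ker (ρ₂.orbitMap w) := by
  set L₁ := MonoidAlgebra.lift K _ G ρ₁
  set L₂ := MonoidAlgebra.lift K _ G ρ₂
  by_cases hsing : ∃ x₀, L₁ x₀ ≠ 0 ∧ (L₁ x₀).det = 0
  · obtain ⟨x₀, hx₀, hdet⟩ := hsing
    obtain ⟨y, hy⟩ := exists_mulVec_ne_zero hx₀
    obtain ⟨z, hz⟩ := exists_mulVec_ne_zero
      (mt (lift_eq_zero_of_lift_eq_zero (fun g => (hchar g).symm) hρ₁) hx₀)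
    refine ⟨_, _, hy, hz, fun x hx => ?_⟩
    have h₁ : L₁ (x * x₀) = 0 := by
      rw [map_mul]
      exact mul_eq_zero_of_mulVec_mulVec_eq_zero hdet hy hx
    rw [LinearMap.mem_ker, orbitMap_apply, mulVec_mulVec, ← map_mul,
      lift_eq_zero_of_lift_eq_zero hchar hρ₂ h₁, zero_mulVec]
  · push Not at hsing
    refine ⟨Pi.single 0 1, Pi.single 0 1, by simp, by simp, fun x hx => ?_⟩
    have h₁ : L₁ x = 0 := by
      by_contra h
      exact hsing x h (exists_mulVec_eq_zero_iff.1 ⟨_, by simp, hx⟩)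
    rw [LinearMap.mem_ker, orbitMap_apply, lift_eq_zero_of_lift_eq_zero hchar hρ₂ h₁, zero_mulVec]

theorem exists_intertwiner [NeZero (2 : K)] (hchar : ∀ g, trace (ρ₁ g) = trace (ρ₂ g))
    (hρ₁ : ¬ρ₁.HasCommonEigenvector) (hρ₂ : ¬ρ₂.HasCommonEigenvector) :
    ∃ P : Matrix (Fin 2) (Fin 2) K, P.det ≠ 0 ∧ ∀ g, P * ρ₁ g = ρ₂ g * P := by
  obtain ⟨v, w, hv, hw, hker⟩ := exists_ker_orbitMap_le hchar hρ₁ hρ₂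
  exact exists_intertwiner_of_ker_orbitMap_le hρ₁ hv hw hker

end MonoidHom

theorem Matrix.exists_abs_det_smul_eq_one {ι : Type*} [Fintype ι] [DecidableEq ι] [Nonempty ι]
    {P : Matrix ι ι ℝ} (hP : P.det ≠ 0) : ∃ c : ℝ, c ≠ 0 ∧ |(c • P).det| = 1 := by
  set r := |P.det| ^ ((Fintype.card ι : ℝ)⁻¹)
  have hr : 0 < r := Real.rpow_pos_of_pos (abs_pos.2 hP) _
  refine ⟨r⁻¹, inv_ne_zero hr.ne', ?_⟩
  rw [det_smul, abs_mul, abs_pow, abs_inv, abs_of_pos hr, inv_pow,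
    Real.rpow_inv_natCast_pow (abs_nonneg _) Fintype.card_ne_zero,
    inv_mul_cancel₀ (abs_ne_zero.2 hP)]

theorem goldman_real_character_rigidity_general
    (G : Type) [Group G]
    (ρ₁ ρ₂ : G →* Matrix (Fin 2) (Fin 2) ℝ)
    (hirr₁ : ¬ ∃ v : Fin 2 → ℝ, v ≠ 0 ∧ ∀ g, ∃ c : ℝ, (ρ₁ g).mulVec v = c • v)
    (hirr₂ : ¬ ∃ v : Fin 2 → ℝ, v ≠ 0 ∧ ∀ g, ∃ c : ℝ, (ρ₂ g).mulVec v = c • v)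
    (hchar : ∀ g, Matrix.trace (ρ₁ g) = Matrix.trace (ρ₂ g)) :
    ∃ P : Matrix (Fin 2) (Fin 2) ℝ, (P.det = 1 ∨ P.det = -1) ∧
      ∀ g, P * ρ₁ g * P⁻¹ = ρ₂ g := by
  obtain ⟨P, hP, hPρ⟩ := MonoidHom.exists_intertwiner hchar hirr₁ hirr₂
  obtain ⟨c, hc, hdet⟩ := Matrix.exists_abs_det_smul_eq_one hP
  refine ⟨c • P, (abs_eq zero_le_one).1 hdet, fun g => ?_⟩
  have hunit : IsUnit (c • P).det := by
    rw [isUnit_iff_ne_zero, det_smul]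
    exact mul_ne_zero (pow_ne_zero _ hc) hP
  rw [smul_mul_assoc, hPρ g, ← mul_smul_comm, mul_nonsing_inv_cancel_right _ _ hunit]

/-- Goldman's rigidity: two irreducible representations G → SL(2,ℝ) with equal
character are conjugate by a matrix of determinant +1 or −1. -/
theorem goldman_real_character_rigidity
    (G : Type) [Group G]
    (ρ₁ ρ₂ : G →* Matrix (Fin 2) (Fin 2) ℝ)
    (hdet₁ : ∀ g, (ρ₁ g).det = 1) (hdet₂ : ∀ g, (ρ₂ g).det = 1)
    (hirr₁ : ¬ ∃ v : Fin 2 → ℝ, v ≠ 0 ∧ ∀ g, ∃ c : ℝ, (ρ₁ g).mulVec v = c • v)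
    (hirr₂ : ¬ ∃ v : Fin 2 → ℝ, v ≠ 0 ∧ ∀ g, ∃ c : ℝ, (ρ₂ g).mulVec v = c • v)
    (hchar : ∀ g, Matrix.trace (ρ₁ g) = Matrix.trace (ρ₂ g)) :
    ∃ P : Matrix (Fin 2) (Fin 2) ℝ, (P.det = 1 ∨ P.det = -1) ∧
      ∀ g, P * ρ₁ g * P⁻¹ = ρ₂ g :=
  goldman_real_character_rigidity_general G ρ₁ ρ₂ hirr₁ hirr₂ hchar
end
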